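/- arXiv:1905.07344 — 3 statements merged into one kernel-verified Lean document; each statement's English description precedes it below -/
import Mathlib

section
/- Let η(x,s) = exp(√(1+‖sx‖²)). For every multi-index β ∈ ℕ₀^N there is a constant C_β > 0 such that for all x ∈ ℝ^N and s > 0, |∂_x^β η(x,s)| ≤ C_β s^{|β|} η(x,s). -/
open scoped ContDiff RealInnerProductSpace

/-- Iterated partial derivative of `f` along the coordinate directions listed in `β`
(a multi-index ∂^β written as a list of coordinates). -/
noncomputable def partialDerivList {N : ℕ} :
    List (Fin N) → (EuclideanSpace ℝ (Fin N) → ℝ) → EuclideanSpace ℝ (Fin N) → ℝ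
  | [], f => f
  | i :: rest, f => fun x =>
      fderiv ℝ (partialDerivList rest f) x (EuclideanSpace.single i (1 : ℝ))

namespace EtaAux


variable {N : ℕ}

noncomputable def g (y : EuclideanSpace ℝ (Fin N)) : ℝ := Real.sqrt (1 + ‖y‖ ^ 2)

lemma one_le_g (y : EuclideanSpace ℝ (Fin N)) : 1 ≤ g y := by
  have h : (1:ℝ) ≤ 1 + ‖y‖ ^ 2 := by nlinarith [sq_nonneg ‖y‖]
  have := Real.sqrt_le_sqrt h
  simpa [g] using this

lemma g_pos (y : EuclideanSpace ℝ (Fin N)) : 0 < g y := lt_of_lt_of_le one_pos (one_le_g y)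

lemma g_ne_zero (y : EuclideanSpace ℝ (Fin N)) : g y ≠ 0 := (g_pos y).ne'

lemma norm_le_g (y : EuclideanSpace ℝ (Fin N)) : ‖y‖ ≤ g y := by
  have h : ‖y‖ ^ 2 ≤ 1 + ‖y‖ ^ 2 := by linarith
  have := Real.sqrt_le_sqrt h
  simpa [g, Real.sqrt_sq (norm_nonneg y)] using this

lemma coord_le_g (y : EuclideanSpace ℝ (Fin N)) (i : Fin N) : |y i| ≤ g y := by
  have h1 : |y i| ≤ ‖y‖ := by
    have h := abs_real_inner_le_norm (EuclideanSpace.single i (1:ℝ)) y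
    rw [EuclideanSpace.inner_single_left, EuclideanSpace.norm_single] at h
    simpa using h
  exact h1.trans (norm_le_g y)

lemma contDiff_g : ContDiff ℝ ∞ (g (N := N)) := by
  rw [contDiff_iff_contDiffAt]
  intro y
  have h1 : ContDiffAt ℝ ∞ (fun y : EuclideanSpace ℝ (Fin N) => 1 + ‖y‖ ^ 2) y :=
    (contDiff_const.add (contDiff_norm_sq ℝ)).contDiffAt
  exact h1.sqrt (by positivity)

lemma q_pos (y : EuclideanSpace ℝ (Fin N)) : (0:ℝ) < 1 + ‖y‖ ^ 2 := by positivity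

lemma hasFDerivAt_g (y : EuclideanSpace ℝ (Fin N)) :
    HasFDerivAt (g (N := N))
      ((1 / (2 * g y)) • ((0 : EuclideanSpace ℝ (Fin N) →L[ℝ] ℝ) + 2 • (innerSL ℝ y))) y := by
  have hq : HasFDerivAt (fun y : EuclideanSpace ℝ (Fin N) => 1 + ‖y‖ ^ 2)
      ((0 : EuclideanSpace ℝ (Fin N) →L[ℝ] ℝ) + 2 • (innerSL ℝ y)) y :=
    (hasFDerivAt_const (1:ℝ) y).add (hasStrictFDerivAt_norm_sq y).hasFDerivAt
  exact hq.sqrt (q_pos y).ne'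

noncomputable def D (j : Fin N) (h : EuclideanSpace ℝ (Fin N) → ℝ) :
    EuclideanSpace ℝ (Fin N) → ℝ :=
  fun y => fderiv ℝ h y (EuclideanSpace.single j (1 : ℝ))

lemma D_g (j : Fin N) (y : EuclideanSpace ℝ (Fin N)) : D j g y = y j * (g y)⁻¹ := by
  rw [D, (hasFDerivAt_g y).fderiv]
  have hg := g_ne_zero y
  simp [EuclideanSpace.inner_single_right, real_inner_comm]
  field_simp


lemma hasFDerivAt_g' (y : EuclideanSpace ℝ (Fin N)) :
    HasFDerivAt (g (N := N)) (fderiv ℝ g y) y :=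
  (hasFDerivAt_g y).differentiableAt.hasFDerivAt

/-- The monomial `y^l * g(y)^(-k)`. -/
noncomputable def mono (l : List (Fin N)) (k : ℕ) : EuclideanSpace ℝ (Fin N) → ℝ :=
  fun y => (l.map (fun i => y i)).prod * (g y) ^ (-(k : ℤ))

def gens (N : ℕ) (s : ℕ) : Set (EuclideanSpace ℝ (Fin N) → ℝ) :=
  { m | ∃ (l : List (Fin N)) (k : ℕ), l.length + s ≤ k ∧ m = mono l k }

noncomputable def A (N : ℕ) (s : ℕ) : Submodule ℝ (EuclideanSpace ℝ (Fin N) → ℝ) :=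
  Submodule.span ℝ (gens N s)

lemma mono_memA {l : List (Fin N)} {k s : ℕ} (h : l.length + s ≤ k) : mono l k ∈ A N s :=
  Submodule.subset_span ⟨l, k, h, rfl⟩

lemma abs_prod_le (y : EuclideanSpace ℝ (Fin N)) (l : List (Fin N)) :
    |(l.map (fun i => y i)).prod| ≤ (g y) ^ l.length := by
  induction l with
  | nil => simp
  | cons a t ih =>
    rw [List.map_cons, List.prod_cons, abs_mul, List.length_cons, pow_succ']
    exact mul_le_mul (coord_le_g y a) ih (abs_nonneg _) (g_pos y).le

lemma mono_bound {m : EuclideanSpace ℝ (Fin N) → ℝ} {s : ℕ} (hm : m ∈ gens N s)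
    (y : EuclideanSpace ℝ (Fin N)) : |m y| ≤ 1 := by
  obtain ⟨l, k, hk, rfl⟩ := hm
  have hg := g_pos y
  have h1 := one_le_g y
  rw [mono, abs_mul, abs_of_pos (zpow_pos hg _)]
  calc |(l.map (fun i => y i)).prod| * g y ^ (-(k:ℤ))
      ≤ g y ^ k * g y ^ (-(k:ℤ)) :=
        mul_le_mul_of_nonneg_right
          ((abs_prod_le y l).trans (pow_le_pow_right₀ h1 (by omega))) (zpow_pos hg _).le
    _ = 1 := by
        rw [← zpow_natCast (g y) k, ← zpow_add₀ (g_ne_zero y)]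
        simp
  
lemma memA_bound {h : EuclideanSpace ℝ (Fin N) → ℝ} {s : ℕ} (hh : h ∈ A N s) :
    ∃ M : ℝ, ∀ y, |h y| ≤ M := by
  induction hh using Submodule.span_induction with
  | mem m hm => exact ⟨1, mono_bound hm⟩
  | zero => exact ⟨0, fun y => by simp⟩
  | add u v hu hv ihu ihv =>
    obtain ⟨M1, h1⟩ := ihu; obtain ⟨M2, h2⟩ := ihv
    exact ⟨M1 + M2, fun y => (abs_add_le _ _).trans (add_le_add (h1 y) (h2 y))⟩
  | smul a u hu ihu =>
    obtain ⟨M, h1⟩ := ihu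
    exact ⟨|a| * M, fun y => by
      simp only [Pi.smul_apply, smul_eq_mul, abs_mul]
      exact mul_le_mul_of_nonneg_left (h1 y) (abs_nonneg a)⟩

lemma contDiff_coord (a : Fin N) : ContDiff ℝ ∞ (fun y : EuclideanSpace ℝ (Fin N) => y a) :=
  (EuclideanSpace.proj a : EuclideanSpace ℝ (Fin N) →L[ℝ] ℝ).contDiff

lemma contDiff_prod_coords (l : List (Fin N)) :
    ContDiff ℝ ∞ (fun y : EuclideanSpace ℝ (Fin N) => (l.map (fun i => y i)).prod) := by
  induction l with
  | nil => simpa using contDiff_const (c := (1:ℝ))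
  | cons a t ih =>
    simp only [List.map_cons, List.prod_cons]
    exact (contDiff_coord a).mul ih

lemma contDiff_mono (l : List (Fin N)) (k : ℕ) : ContDiff ℝ ∞ (mono l k) := by
  have hginv : ContDiff ℝ ∞ (fun y : EuclideanSpace ℝ (Fin N) => ((g y)⁻¹) ^ k) :=
    (contDiff_g.inv g_ne_zero).pow k
  have : mono (N := N) l k = fun y => (l.map (fun i => y i)).prod * ((g y)⁻¹) ^ k := by
    funext y
    rw [mono, zpow_neg, zpow_natCast, inv_pow]
  rw [this]
  exact (contDiff_prod_coords l).mul hginv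

lemma memA_contDiff {h : EuclideanSpace ℝ (Fin N) → ℝ} {s : ℕ} (hh : h ∈ A N s) :
    ContDiff ℝ ∞ h := by
  induction hh using Submodule.span_induction with
  | mem m hm => obtain ⟨l, k, _, rfl⟩ := hm; exact contDiff_mono l k
  | zero => exact contDiff_const (c := (0:ℝ))
  | add u v hu hv ihu ihv => exact ihu.add ihv
  | smul a u hu ihu => exact ihu.const_smul a

lemma memA_differentiable {h : EuclideanSpace ℝ (Fin N) → ℝ} {s : ℕ} (hh : h ∈ A N s) :
    Differentiable ℝ h :=
  (memA_contDiff hh).differentiable (by simp)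


lemma differentiable_mono (l : List (Fin N)) (k : ℕ) : Differentiable ℝ (mono l k) :=
  (contDiff_mono l k).differentiable (by simp)

/-- multiplication by a coordinate decreases slack by one -/
lemma mulCoord_memA (a : Fin N) {s : ℕ} {h : EuclideanSpace ℝ (Fin N) → ℝ}
    (hh : h ∈ A N (s + 1)) : (fun y => y a * h y) ∈ A N s := by
  induction hh using Submodule.span_induction with
  | mem m hm =>
    obtain ⟨l, k, hk, rfl⟩ := hm
    have : (fun y : EuclideanSpace ℝ (Fin N) => y a * mono l k y) = mono (a :: l) k := by
      funext y; rw [mono, mono]; simp [mul_assoc]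
    rw [this]
    exact mono_memA (by simpa using by omega)
  | zero =>
    have : (fun y : EuclideanSpace ℝ (Fin N) => y a * (0 : EuclideanSpace ℝ (Fin N) → ℝ) y)
        = (0 : EuclideanSpace ℝ (Fin N) → ℝ) := by funext y; simp
    rw [this]; exact (A N s).zero_mem
  | add u v hu hv ihu ihv =>
    have : (fun y : EuclideanSpace ℝ (Fin N) => y a * (u + v) y)
        = (fun y => y a * u y) + fun y => y a * v y := by
      funext y; simp [mul_add]
    rw [this]; exact (A N s).add_mem ihu ihv
  | smul c u hu ihu =>
    have : (fun y : EuclideanSpace ℝ (Fin N) => y a * (c • u) y)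
        = c • fun y => y a * u y := by
      funext y; simp; ring
    rw [this]; exact (A N s).smul_mem c ihu

/-- multiplication by `y j / g y` preserves slack -/
lemma mulCoordInvG_memA (a : Fin N) {s : ℕ} {h : EuclideanSpace ℝ (Fin N) → ℝ}
    (hh : h ∈ A N s) : (fun y => y a * (g y)⁻¹ * h y) ∈ A N s := by
  induction hh using Submodule.span_induction with
  | mem m hm =>
    obtain ⟨l, k, hk, rfl⟩ := hm
    have : (fun y : EuclideanSpace ℝ (Fin N) => y a * (g y)⁻¹ * mono l k y)
        = mono (a :: l) (k + 1) := by
      funext y; rw [mono, mono]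
      have hg := g_ne_zero y
      simp only [List.map_cons, List.prod_cons]
      push_cast
      rw [show (-((k:ℤ)+1)) = -(k:ℤ) + (-1) by ring, zpow_add₀ hg]
      simp [zpow_neg]
      ring
    rw [this]
    exact mono_memA (by simp; omega)
  | zero =>
    have : (fun y : EuclideanSpace ℝ (Fin N) => y a * (g y)⁻¹ *
        (0 : EuclideanSpace ℝ (Fin N) → ℝ) y) = (0 : EuclideanSpace ℝ (Fin N) → ℝ) := by
      funext y; simp
    rw [this]; exact (A N s).zero_mem
  | add u v hu hv ihu ihv =>
    have : (fun y : EuclideanSpace ℝ (Fin N) => y a * (g y)⁻¹ * (u + v) y)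
        = (fun y => y a * (g y)⁻¹ * u y) + fun y => y a * (g y)⁻¹ * v y := by
      funext y; simp [mul_add]
    rw [this]; exact (A N s).add_mem ihu ihv
  | smul c u hu ihu =>
    have : (fun y : EuclideanSpace ℝ (Fin N) => y a * (g y)⁻¹ * (c • u) y)
        = c • fun y => y a * (g y)⁻¹ * u y := by
      funext y; simp; ring
    rw [this]; exact (A N s).smul_mem c ihu

lemma D_ginvpow (k : ℕ) (j : Fin N) (y : EuclideanSpace ℝ (Fin N)) :
    D j (fun y => (g y) ^ (-(k:ℤ))) y = (-(k:ℝ)) * (y j * (g y) ^ (-((k:ℤ)+2))) := by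
  have hg := g_ne_zero y
  have h2 : HasFDerivAt (fun y : EuclideanSpace ℝ (Fin N) => (g y) ^ (-(k:ℤ)))
      ((((-(k:ℤ) : ℤ) : ℝ) * (g y) ^ (-(k:ℤ) - 1) : ℝ) • fderiv ℝ g y) y :=
    (hasDerivAt_zpow (-(k:ℤ)) (g y) (Or.inl hg)).comp_hasFDerivAt y (hasFDerivAt_g' y)
  rw [D, h2.fderiv]
  simp only [ContinuousLinearMap.coe_smul', Pi.smul_apply, smul_eq_mul]
  have : (fderiv ℝ g y) (EuclideanSpace.single j (1:ℝ)) = y j * (g y)⁻¹ := D_g j y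
  rw [this]
  rw [show (-((k:ℤ)+2)) = (-(k:ℤ) - 1) + (-1) by ring, zpow_add₀ hg]
  push_cast
  simp [zpow_neg]
  ring

lemma D_mono (j : Fin N) (l : List (Fin N)) : ∀ (s k : ℕ), l.length + s ≤ k →
    D j (mono l k) ∈ A N s := by
  induction l with
  | nil =>
    intro s k hk
    have hmeq : mono (N := N) [] k = fun y => (g y) ^ (-(k:ℤ)) := by
      funext y; rw [mono]; simp
    have : D j (mono ([] : List (Fin N)) k) = (-(k:ℝ)) • mono [j] (k + 2) := by
      funext y
      rw [hmeq, D_ginvpow k j y]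
      rw [Pi.smul_apply, mono]
      push_cast
      simp [smul_eq_mul]
    rw [this]
    exact (A N s).smul_mem _ (mono_memA (by simp; omega))
  | cons a t ih =>
    intro s k hk
    simp only [List.length_cons] at hk
    have hmeq : ∀ y : EuclideanSpace ℝ (Fin N), mono (a :: t) k y = y a * mono t k y := by
      intro y; rw [mono, mono]; simp [mul_assoc]
    have hD : D j (mono (a :: t) k)
        = (fun y => (EuclideanSpace.single j (1:ℝ)) a * mono t k y)
          + fun y => y a * D j (mono t k) y := by
      funext y
      rw [D]
      have h1 : HasFDerivAt (fun y : EuclideanSpace ℝ (Fin N) => y a)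
          (EuclideanSpace.proj a : EuclideanSpace ℝ (Fin N) →L[ℝ] ℝ) y :=
        (EuclideanSpace.proj a : EuclideanSpace ℝ (Fin N) →L[ℝ] ℝ).hasFDerivAt
      have h2 : HasFDerivAt (mono t k) (fderiv ℝ (mono t k) y) y :=
        (differentiable_mono t k y).hasFDerivAt
      have h3 : HasFDerivAt (fun y : EuclideanSpace ℝ (Fin N) => y a * mono t k y)
          (y a • fderiv ℝ (mono t k) y + mono t k y • (EuclideanSpace.proj a :
            EuclideanSpace ℝ (Fin N) →L[ℝ] ℝ)) y := h1.mul h2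
      have heq : (fun y : EuclideanSpace ℝ (Fin N) => y a * mono t k y)
          = mono (a :: t) k := by funext y; rw [hmeq y]
      rw [heq] at h3
      rw [h3.fderiv]
      simp only [ContinuousLinearMap.add_apply, ContinuousLinearMap.coe_smul', Pi.smul_apply,
        smul_eq_mul, Pi.add_apply, D, ContinuousLinearMap.smulRight_apply]
      have : (EuclideanSpace.proj a : EuclideanSpace ℝ (Fin N) →L[ℝ] ℝ)
          (EuclideanSpace.single j (1:ℝ)) = (EuclideanSpace.single j (1:ℝ)) a := rfl
      rw [this]
      ring
    rw [hD]
    refine (A N s).add_mem ?_ ?_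
    · by_cases haj : a = j
      · have : (fun y => (EuclideanSpace.single j (1:ℝ)) a * mono t k y)
            = (1:ℝ) • mono t k := by
          funext y; subst haj; simp [EuclideanSpace.single_apply]
        rw [this]
        exact (A N s).smul_mem _ (mono_memA (by omega))
      · have : (fun y => (EuclideanSpace.single j (1:ℝ)) a * mono t k y)
            = (0 : EuclideanSpace ℝ (Fin N) → ℝ) := by
          funext y; simp [EuclideanSpace.single_apply, haj]
        rw [this]
        exact (A N s).zero_mem
    · exact mulCoord_memA a (ih (s + 1) k (by omega))

lemma D_memA (j : Fin N) {h : EuclideanSpace ℝ (Fin N) → ℝ} (hh : h ∈ A N 0) :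
    D j h ∈ A N 0 := by
  induction hh using Submodule.span_induction with
  | mem m hm =>
    obtain ⟨l, k, hk, rfl⟩ := hm
    exact D_mono j l 0 k hk
  | zero =>
    have : D j (0 : EuclideanSpace ℝ (Fin N) → ℝ) = 0 := by
      funext y; rw [D]
      have : (0 : EuclideanSpace ℝ (Fin N) → ℝ) = fun _ => (0:ℝ) := rfl
      rw [this, fderiv_fun_const]; simp
    rw [this]; exact (A N 0).zero_mem
  | add u v hu hv ihu ihv =>
    have : D j (u + v) = D j u + D j v := by
      funext y; rw [D]
      simp only [Pi.add_apply, D]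
      rw [show (u + v) = (fun y => u y + v y) from rfl,
        fderiv_fun_add (memA_differentiable hu y) (memA_differentiable hv y)]
      simp
    rw [this]; exact (A N 0).add_mem ihu ihv
  | smul c u hu ihu =>
    have : D j (c • u) = c • D j u := by
      funext y; rw [D]
      simp only [Pi.smul_apply, D]
      rw [show (c • u) = (fun y => c • u y) from rfl,
        fderiv_fun_const_smul (memA_differentiable hu y)]
      simp
    rw [this]; exact (A N 0).smul_mem c ihu


noncomputable def F (y : EuclideanSpace ℝ (Fin N)) : ℝ := Real.exp (g y)

lemma contDiff_F : ContDiff ℝ ∞ (F (N := N)) := contDiff_g.exp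

lemma differentiable_g : Differentiable ℝ (g (N := N)) :=
  contDiff_g.differentiable (by simp)

lemma F_pos (y : EuclideanSpace ℝ (Fin N)) : 0 < F y := Real.exp_pos _

lemma hasFDerivAt_F (y : EuclideanSpace ℝ (Fin N)) :
    HasFDerivAt (F (N := N)) (Real.exp (g y) • fderiv ℝ g y) y :=
  (differentiable_g y).hasFDerivAt.exp

lemma D_F (j : Fin N) (y : EuclideanSpace ℝ (Fin N)) :
    (Real.exp (g y) • fderiv ℝ g y) (EuclideanSpace.single j (1:ℝ))
      = F y * (y j * (g y)⁻¹) := by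
  have := D_g j y
  rw [D] at this
  simp [F, this]

lemma key (β : List (Fin N)) :
    ∃ h, h ∈ A N 0 ∧ partialDerivList β (F (N := N)) = fun y => F y * h y := by
  induction β with
  | nil =>
    refine ⟨mono [] 0, mono_memA (by simp), ?_⟩
    funext y
    show F y = F y * mono [] 0 y
    rw [mono]; simp
  | cons j β ih =>
    obtain ⟨h, hA, hEq⟩ := ih
    refine ⟨(fun y => y j * (g y)⁻¹ * h y) + D j h,
      (A N 0).add_mem (mulCoordInvG_memA j hA) (D_memA j hA), ?_⟩
    funext x
    show fderiv ℝ (partialDerivList β F) x (EuclideanSpace.single j (1:ℝ)) = _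
    rw [hEq]
    have hFh : HasFDerivAt (fun y => F y * h y)
        (F x • fderiv ℝ h x + (Real.exp (g x) • fderiv ℝ g x).smulRight (h x)) x :=
      (hasFDerivAt_F x).mul' ((memA_differentiable hA) x).hasFDerivAt
    rw [hFh.fderiv]
    simp only [ContinuousLinearMap.add_apply, ContinuousLinearMap.coe_smul', Pi.smul_apply,
      smul_eq_mul, ContinuousLinearMap.smulRight_apply, Pi.add_apply]
    have hdg : (fderiv ℝ g x) (EuclideanSpace.single j (1:ℝ)) = x j * (g x)⁻¹ := D_g j x
    rw [hdg]
    show F x * D j h x + Real.exp (g x) * (x j * (g x)⁻¹) * h x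
        = F x * (x j * (g x)⁻¹ * h x + D j h x)
    rw [show Real.exp (g x) = F x from rfl]
    ring

lemma partialDerivList_F_smooth (β : List (Fin N)) :
    Differentiable ℝ (partialDerivList β (F (N := N))) := by
  obtain ⟨h, hA, hEq⟩ := key β
  rw [hEq]
  exact (contDiff_F.mul (memA_contDiff hA)).differentiable (by simp)

lemma boundF (β : List (Fin N)) : ∃ C : ℝ, 0 < C ∧
    ∀ y, |partialDerivList β (F (N := N)) y| ≤ C * F y := by
  obtain ⟨h, hA, hEq⟩ := key β
  obtain ⟨M, hM⟩ := memA_bound hA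
  refine ⟨max M 1, lt_of_lt_of_le one_pos (le_max_right _ _), fun y => ?_⟩
  rw [hEq, abs_mul, abs_of_pos (F_pos y), mul_comm]
  exact mul_le_mul_of_nonneg_right ((hM y).trans (le_max_left _ _)) (F_pos y).le

lemma scaling (s : ℝ) : ∀ (β : List (Fin N)) (x : EuclideanSpace ℝ (Fin N)),
    partialDerivList β (fun y => F (s • y)) x
      = s ^ β.length * partialDerivList β (F (N := N)) (s • x) := by
  intro β
  induction β with
  | nil => intro x; show F (s • x) = s ^ 0 * F (s • x); simp
  | cons j β ih =>
    intro x
    have hfun : partialDerivList β (fun y => F (s • y))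
        = fun x => s ^ β.length * partialDerivList β (F (N := N)) (s • x) := funext ih
    show fderiv ℝ (partialDerivList β fun y => F (s • y)) x (EuclideanSpace.single j (1:ℝ)) = _
    rw [hfun]
    have h1 : HasFDerivAt (fun x : EuclideanSpace ℝ (Fin N) => s • x)
        (s • ContinuousLinearMap.id ℝ (EuclideanSpace ℝ (Fin N))) x :=
      (hasFDerivAt_id x).const_smul s
    have h2 : HasFDerivAt (fun x => partialDerivList β (F (N := N)) (s • x))
        ((fderiv ℝ (partialDerivList β (F (N := N))) (s • x)).comp
          (s • ContinuousLinearMap.id ℝ (EuclideanSpace ℝ (Fin N)))) x :=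
      ((partialDerivList_F_smooth β (s • x)).hasFDerivAt).comp x h1
    have h3 := h2.const_mul (s ^ β.length)
    rw [h3.fderiv]
    simp only [ContinuousLinearMap.coe_smul', Pi.smul_apply, smul_eq_mul,
      ContinuousLinearMap.coe_comp', Function.comp_apply, ContinuousLinearMap.coe_id', id_eq,
      map_smul]
    show s ^ β.length * (s * fderiv ℝ (partialDerivList β F) (s • x)
        (EuclideanSpace.single j (1:ℝ))) = _
    rw [List.length_cons, pow_succ]
    show _ = s ^ β.length * s *
      fderiv ℝ (partialDerivList β F) (s • x) (EuclideanSpace.single j (1:ℝ))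
    ring

end EtaAux

theorem eta_derivative_bounds (N : ℕ) (hN : 0 < N)
    (η : EuclideanSpace ℝ (Fin N) → ℝ → ℝ)
    (hη : ∀ x s, η x s = Real.exp (Real.sqrt (1 + ‖s • x‖ ^ 2)))
    (β : List (Fin N)) :
    ∃ C : ℝ, 0 < C ∧ ∀ (x : EuclideanSpace ℝ (Fin N)) (s : ℝ), 0 < s →
      |partialDerivList β (fun y => η y s) x| ≤ C * s ^ β.length * η x s := by
  obtain ⟨C, hC, hbound⟩ := EtaAux.boundF (N := N) β
  refine ⟨C, hC, fun x s hs => ?_⟩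
  have hfun : (fun y => η y s) = fun y => EtaAux.F (s • y) := by
    funext y; rw [hη]; rfl
  have hηx : η x s = EtaAux.F (s • x) := by rw [hη]; rfl
  rw [hfun, EtaAux.scaling s β x, abs_mul, abs_of_pos (pow_pos hs _), hηx]
  have h1 := hbound (s • x)
  have h2 : (0:ℝ) ≤ s ^ β.length := (pow_pos hs _).le
  calc s ^ β.length * |partialDerivList β EtaAux.F (s • x)|
      ≤ s ^ β.length * (C * EtaAux.F (s • x)) := mul_le_mul_of_nonneg_left h1 h2
    _ = C * s ^ β.length * EtaAux.F (s • x) := by ring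
end

section
/- Suppose φ : ℝ^N × (0,∞) → ℝ is smooth in x and for every multi-index β there is C_β > 0 with |∂_x^β φ(x,s)| ≤ C_β s^{|β|} exp(√(1+‖sx‖²)) for all x and all s > 1/4. Then for every nonzero α ∈ ℝ^N the function ψ_α(x,s) = s^{−1}(φ(x,s) − φ(σ_α(x),s))/⟨x,α⟩ satisfies bounds of the same form: for every β there is C'_β > 0 with |∂_x^β ψ_α(x,s)| ≤ C'_β s^{|β|} exp(√(1+‖sx‖²)) for all x ∈ ℝ^N and s > 1/4. -/
open scoped ContDiff Topology RealInnerProductSpace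
open MeasureTheory

section Aux
variable {N : ℕ}
local notation "E" => EuclideanSpace ℝ (Fin N)

theorem pdl_contDiff (β : List (Fin N)) {g : E → ℝ} (hg : ContDiff ℝ ∞ g) :
    ContDiff ℝ ∞ (partialDerivList β g) := by
  induction β with
  | nil => exact hg
  | cons i rest ih =>
    show ContDiff ℝ ∞ fun x => fderiv ℝ (partialDerivList rest g) x (EuclideanSpace.single i 1)
    exact (ih.fderiv_right (by exact_mod_cast le_top)).clm_apply contDiff_const

theorem pdl_ofFn {n : ℕ} (p : Fin n → Fin N) {g : E → ℝ} (hg : ContDiff ℝ ∞ g) (x : E) :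
    partialDerivList (List.ofFn p) g x
      = iteratedFDeriv ℝ n g x (fun j => EuclideanSpace.single (p j) 1) := by
  induction n generalizing x with
  | zero => simp [List.ofFn_zero, partialDerivList]
  | succ n ih =>
    rw [List.ofFn_succ]
    show fderiv ℝ (partialDerivList (List.ofFn (p ∘ Fin.succ)) g) x
      (EuclideanSpace.single (p 0) 1) = _
    have hrw : partialDerivList (List.ofFn (p ∘ Fin.succ)) g
        = fun y => iteratedFDeriv ℝ n g y (fun j => EuclideanSpace.single ((p ∘ Fin.succ) j) 1) :=
      funext fun y => ih (p ∘ Fin.succ) y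
    rw [hrw, iteratedFDeriv_succ_apply_left]
    have hT : DifferentiableAt ℝ (iteratedFDeriv ℝ n g) x :=
      ((hg.iteratedFDeriv_right (m := 1) (by exact_mod_cast le_top)).differentiable
        one_ne_zero) x
    rw [fderiv_continuousMultilinear_apply_const_apply hT]
    rfl

theorem coord_abs_le_norm (x : E) (i : Fin N) : |x i| ≤ ‖x‖ := by
  rw [EuclideanSpace.norm_eq x]
  have h1 : |x i| = Real.sqrt (|x i| ^ 2) := by
    rw [Real.sqrt_sq (abs_nonneg _)]
  rw [h1]
  apply Real.sqrt_le_sqrt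
  exact Finset.single_le_sum (f := fun i => |x i| ^ 2) (fun j _ => by positivity)
    (Finset.mem_univ i)

theorem eucl_decomp (x : E) : x = ∑ i : Fin N, x i • EuclideanSpace.single i (1:ℝ) := by
  ext j
  have h : (∑ i : Fin N, x i • EuclideanSpace.single i (1:ℝ)) j
      = ∑ i : Fin N, (x i • EuclideanSpace.single i (1:ℝ)) j :=
    by rw [WithLp.ofLp_sum, Finset.sum_apply]
  rw [h]
  simp [EuclideanSpace.single_apply]

theorem multilinear_norm_le (n : ℕ) (T : ContinuousMultilinearMap ℝ (fun _ : Fin n => E) ℝ) :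
    ‖T‖ ≤ ∑ p : Fin n → Fin N, ‖T (fun j => EuclideanSpace.single (p j) 1)‖ := by
  apply T.opNorm_le_bound (Finset.sum_nonneg fun p _ => norm_nonneg _)
  intro v
  have hv : v = fun j => ∑ i : Fin N, (v j i) • EuclideanSpace.single i (1:ℝ) :=
    funext fun j => eucl_decomp (v j)
  calc ‖T v‖
      = ‖∑ p : Fin n → Fin N, (∏ j, v j (p j)) • T (fun j => EuclideanSpace.single (p j) 1)‖ := by
        conv_lhs => rw [hv]
        rw [T.map_sum (g := fun j i => (v j i) • EuclideanSpace.single i (1:ℝ))]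
        congr 1
        apply Finset.sum_congr rfl
        intro p _
        rw [← T.map_smul_univ]
    _ ≤ ∑ p : Fin n → Fin N, ‖(∏ j, v j (p j)) • T (fun j => EuclideanSpace.single (p j) 1)‖ :=
        norm_sum_le _ _
    _ ≤ ∑ p : Fin n → Fin N, ‖T (fun j => EuclideanSpace.single (p j) 1)‖ * ∏ j, ‖v j‖ := by
        apply Finset.sum_le_sum
        intro p _
        rw [norm_smul, mul_comm]
        apply mul_le_mul_of_nonneg_left _ (norm_nonneg _)
        rw [Real.norm_eq_abs, Finset.abs_prod]
        apply Finset.prod_le_prod (fun j _ => abs_nonneg _)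
        intro j _
        exact coord_abs_le_norm (v j) (p j)
    _ = (∑ p : Fin n → Fin N, ‖T (fun j => EuclideanSpace.single (p j) 1)‖) * ∏ j, ‖v j‖ := by
        rw [Finset.sum_mul]

theorem joint_fderiv_contDiff {H : ℝ → E → ℝ}
    (hH : ContDiff ℝ ∞ (fun p : ℝ × E => H p.1 p.2)) :
    ContDiff ℝ ∞ (fun p : ℝ × E => fderiv ℝ (H p.1) p.2) := by
  have : ContDiff ℝ ∞ (Function.uncurry fun (p : ℝ × E) (x : E) => H p.1 x) :=
    hH.comp ((contDiff_fst.comp contDiff_fst).prodMk contDiff_snd)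
  exact ContDiff.fderiv (f := fun (p : ℝ × E) (x : E) => H p.1 x) (g := Prod.snd)
    this contDiff_snd (by exact_mod_cast le_top)

theorem slice_contDiff {H : ℝ → E → ℝ}
    (hH : ContDiff ℝ ∞ (fun p : ℝ × E => H p.1 p.2)) (t : ℝ) :
    ContDiff ℝ ∞ (H t) :=
  hH.comp (contDiff_const.prodMk contDiff_id)

theorem fderiv_slice_continuous {H : ℝ → E → ℝ}
    (hH : ContDiff ℝ ∞ (fun p : ℝ × E => H p.1 p.2)) (x : E) :
    Continuous (fun t : ℝ => fderiv ℝ (H t) x) :=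
  (joint_fderiv_contDiff hH).continuous.comp (continuous_id.prodMk continuous_const)

theorem hasFDerivAt_intervalIntegral (H : ℝ → E → ℝ)
    (hH : ContDiff ℝ ∞ (fun p : ℝ × E => H p.1 p.2)) (x₀ : E) :
    HasFDerivAt (fun x => ∫ t in (0:ℝ)..1, H t x)
      (∫ t in (0:ℝ)..1, fderiv ℝ (H t) x₀) x₀ := by
  have hFd := joint_fderiv_contDiff hH
  obtain ⟨M, hM⟩ := ((isCompact_Icc (a := (0:ℝ)) (b := 1)).prod
      (isCompact_closedBall x₀ 1)).exists_bound_of_continuousOn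
    (hFd.continuous.comp (continuous_fst.prodMk continuous_snd)).continuousOn
  apply intervalIntegral.hasFDerivAt_integral_of_dominated_of_fderiv_le
    (F := fun x t => H t x) (F' := fun x t => fderiv ℝ (H t) x)
    (bound := fun _ => M) (Metric.ball_mem_nhds x₀ one_pos)
  · exact Filter.Eventually.of_forall fun x =>
      ((hH.continuous.comp (continuous_id.prodMk continuous_const)).aestronglyMeasurable)
  · exact ((hH.continuous.comp (continuous_id.prodMk continuous_const)).intervalIntegrable 0 1)
  · exact (fderiv_slice_continuous hH x₀).aestronglyMeasurable
  · refine Filter.Eventually.of_forall fun t ht x hx => ?_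
    have ht' : t ∈ Set.Icc (0:ℝ) 1 := by
      rw [Set.uIoc_of_le (by norm_num : (0:ℝ) ≤ 1)] at ht
      exact Set.Ioc_subset_Icc_self ht
    exact hM (t, x) ⟨ht', Metric.ball_subset_closedBall hx⟩
  · exact intervalIntegrable_const
  · refine Filter.Eventually.of_forall fun t ht x hx => ?_
    exact ((slice_contDiff hH t).differentiable (by simp) x).hasFDerivAt

theorem pdl_intervalIntegral (F : ℝ → E → ℝ)
    (hF : ContDiff ℝ ∞ (fun p : ℝ × E => F p.1 p.2)) (β : List (Fin N)) :
    ContDiff ℝ ∞ (fun p : ℝ × E => partialDerivList β (F p.1) p.2) ∧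
    ∀ x : E, partialDerivList β (fun x => ∫ t in (0:ℝ)..1, F t x) x
      = ∫ t in (0:ℝ)..1, partialDerivList β (F t) x := by
  induction β with
  | nil => exact ⟨hF, fun _ => rfl⟩
  | cons i rest ih =>
    obtain ⟨ihs, ihe⟩ := ih
    have hsm : ContDiff ℝ ∞ (fun p : ℝ × E => partialDerivList (i :: rest) (F p.1) p.2) := by
      show ContDiff ℝ ∞ fun p : ℝ × E =>
        fderiv ℝ (partialDerivList rest (F p.1)) p.2 (EuclideanSpace.single i 1)
      exact ((joint_fderiv_contDiff (H := fun t x => partialDerivList rest (F t) x)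
        ihs)).clm_apply contDiff_const
    refine ⟨hsm, fun x => ?_⟩
    show fderiv ℝ (partialDerivList rest (fun x => ∫ t in (0:ℝ)..1, F t x)) x
      (EuclideanSpace.single i 1) = _
    have hre : partialDerivList rest (fun x => ∫ t in (0:ℝ)..1, F t x)
        = fun x => ∫ t in (0:ℝ)..1, partialDerivList rest (F t) x := funext ihe
    rw [hre]
    have hkey := hasFDerivAt_intervalIntegral (fun t x => partialDerivList rest (F t) x) ihs x
    rw [hkey.fderiv]
    rw [ContinuousLinearMap.intervalIntegral_apply
      ((fderiv_slice_continuous (H := fun t x => partialDerivList rest (F t) x) ihs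
        x).intervalIntegrable 0 1) (EuclideanSpace.single i 1)]
    rfl

noncomputable def Amap (α : E) (t : ℝ) : E →L[ℝ] E :=
  ContinuousLinearMap.id ℝ _ - (2 * t / ‖α‖ ^ 2) • (innerSL ℝ α).smulRight α

theorem Amap_apply (α : E) (t : ℝ) (x : E) :
    Amap α t x = x - (2 * t * (inner ℝ x α : ℝ) / ‖α‖ ^ 2) • α := by
  simp only [Amap, ContinuousLinearMap.sub_apply, ContinuousLinearMap.id_apply,
    ContinuousLinearMap.smul_apply, ContinuousLinearMap.smulRight_apply, innerSL_apply_apply,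
    smul_smul]
  rw [real_inner_comm α x]
  ring_nf

theorem Amap_norm_le (α : E) (hα : α ≠ 0) {t : ℝ} (ht : t ∈ Set.Icc (0:ℝ) 1) (y : E) :
    ‖Amap α t y‖ ≤ ‖y‖ := by
  have hα2 : (0:ℝ) < ‖α‖ ^ 2 := pow_pos (norm_pos_iff.mpr hα) 2
  rw [Amap_apply]
  set c : ℝ := (inner ℝ y α : ℝ) with hc
  set r : ℝ := 2 * t * c / ‖α‖ ^ 2 with hr
  have hsq : ‖y - r • α‖ ^ 2 = ‖y‖ ^ 2 - 2 * (r * c) + r ^ 2 * ‖α‖ ^ 2 := by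
    rw [norm_sub_sq_real, real_inner_smul_right, norm_smul]
    rw [Real.norm_eq_abs, mul_pow, sq_abs]
  have hle : ‖y - r • α‖ ^ 2 ≤ ‖y‖ ^ 2 := by
    rw [hsq]
    have key : -(2 * (r * c)) + r ^ 2 * ‖α‖ ^ 2 ≤ 0 := by
      have hexpr : -(2 * (r * c)) + r ^ 2 * ‖α‖ ^ 2
          = 4 * t * c ^ 2 * (t - 1) / ‖α‖ ^ 2 := by
        rw [hr]; field_simp; ring
      rw [hexpr]
      apply div_nonpos_of_nonpos_of_nonneg _ (le_of_lt hα2)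
      have h1 : (0:ℝ) ≤ 4 * t * c ^ 2 := by nlinarith [sq_nonneg c, ht.1]
      have h2 : t - 1 ≤ 0 := by linarith [ht.2]
      exact mul_nonpos_of_nonneg_of_nonpos h1 h2
    linarith
  nlinarith [norm_nonneg (y - r • α), norm_nonneg y]

theorem Amap_joint_smooth (α : E) :
    ContDiff ℝ ∞ (fun p : ℝ × E => Amap α p.1 p.2) := by
  have : (fun p : ℝ × E => Amap α p.1 p.2)
      = fun p : ℝ × E => p.2 - (2 * p.1 * (inner ℝ p.2 α : ℝ) / ‖α‖ ^ 2) • α := by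
    funext p; exact Amap_apply α p.1 p.2
  rw [this]
  apply ContDiff.sub contDiff_snd
  refine ContDiff.smul (𝕜 := ℝ) (f := fun x : ℝ × E => 2 * x.1 * (inner ℝ x.2 α : ℝ) / ‖α‖ ^ 2) (g := fun _ : ℝ × E => α) ?_ contDiff_const
  have h1 : ContDiff ℝ ∞ fun p : ℝ × E => (inner ℝ p.2 α : ℝ) :=
    ContDiff.inner ℝ contDiff_snd contDiff_const
  have h2 : ContDiff ℝ ∞ fun p : ℝ × E => 2 * p.1 := contDiff_const.mul contDiff_fst
  exact (h2.mul h1).div_const _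

end Aux

theorem difference_part_bounds (N : ℕ) (hN : 0 < N)
    (φ : EuclideanSpace ℝ (Fin N) → ℝ → ℝ)
    (hφsmooth : ∀ s : ℝ, ContDiff ℝ (⊤ : ℕ∞) (fun x => φ x s))
    (hφ : ∀ β : List (Fin N), ∃ C : ℝ, 0 < C ∧
      ∀ (x : EuclideanSpace ℝ (Fin N)) (s : ℝ), 1 / 4 < s →
        |partialDerivList β (fun y => φ y s) x| ≤
          C * s ^ β.length * Real.exp (Real.sqrt (1 + ‖s • x‖ ^ 2)))
    (α : EuclideanSpace ℝ (Fin N)) (hα : α ≠ 0)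
    (ψ : EuclideanSpace ℝ (Fin N) → ℝ → ℝ)
    (hψ : ∀ (x : EuclideanSpace ℝ (Fin N)) (s : ℝ),
      ψ x s = (2 / (s * ‖α‖ ^ 2)) *
        ∫ t in (0 : ℝ)..1,
          (inner ℝ (gradient (fun y => φ y s)
            (x - (2 * t * (inner ℝ x α : ℝ) / ‖α‖ ^ 2) • α)) α : ℝ)) :
    ∀ β : List (Fin N), ∃ C' : ℝ, 0 < C' ∧
      ∀ (x : EuclideanSpace ℝ (Fin N)) (s : ℝ), 1 / 4 < s →
        |partialDerivList β (fun y => ψ y s) x| ≤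
          C' * s ^ β.length * Real.exp (Real.sqrt (1 + ‖s • x‖ ^ 2)) := by
  intro β
  set n := β.length with hn
  -- Step A: bound on the iterated derivative of order n+1
  have hiter : ∃ C : ℝ, 0 < C ∧ ∀ (x : EuclideanSpace ℝ (Fin N)) (s : ℝ), 1 / 4 < s →
      ‖iteratedFDeriv ℝ (n + 1) (fun y => φ y s) x‖ ≤
        C * s ^ (n + 1) * Real.exp (Real.sqrt (1 + ‖s • x‖ ^ 2)) := by
    choose Cf hCfpos hCf using hφ
    refine ⟨(∑ p : Fin (n + 1) → Fin N, Cf (List.ofFn p)) + 1,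
      add_pos_of_nonneg_of_pos (Finset.sum_nonneg fun p _ => (hCfpos _).le) one_pos, ?_⟩
    intro x s hs
    have hs0 : (0:ℝ) < s := lt_trans (by norm_num) hs
    have hf : ContDiff ℝ ∞ (fun y => φ y s) := (hφsmooth s).of_le (by simp)
    have hEpos : (0:ℝ) < s ^ (n + 1) * Real.exp (Real.sqrt (1 + ‖s • x‖ ^ 2)) := by positivity
    calc ‖iteratedFDeriv ℝ (n + 1) (fun y => φ y s) x‖
        ≤ ∑ p : Fin (n + 1) → Fin N,
            ‖iteratedFDeriv ℝ (n + 1) (fun y => φ y s) x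
              (fun j => EuclideanSpace.single (p j) 1)‖ :=
          multilinear_norm_le (n + 1) _
      _ ≤ ∑ p : Fin (n + 1) → Fin N,
            Cf (List.ofFn p) * s ^ (n + 1) * Real.exp (Real.sqrt (1 + ‖s • x‖ ^ 2)) := by
          apply Finset.sum_le_sum
          intro p _
          rw [← pdl_ofFn p hf x, Real.norm_eq_abs]
          have := hCf (List.ofFn p) x s hs
          rwa [List.length_ofFn] at this
      _ = (∑ p : Fin (n + 1) → Fin N, Cf (List.ofFn p)) *
            (s ^ (n + 1) * Real.exp (Real.sqrt (1 + ‖s • x‖ ^ 2))) := by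
          rw [Finset.sum_mul]; apply Finset.sum_congr rfl; intros; ring
      _ ≤ ((∑ p : Fin (n + 1) → Fin N, Cf (List.ofFn p)) + 1) *
            (s ^ (n + 1) * Real.exp (Real.sqrt (1 + ‖s • x‖ ^ 2))) := by
          apply mul_le_mul_of_nonneg_right (by linarith) hEpos.le
      _ = ((∑ p : Fin (n + 1) → Fin N, Cf (List.ofFn p)) + 1) * s ^ (n + 1) *
            Real.exp (Real.sqrt (1 + ‖s • x‖ ^ 2)) := by ring
  obtain ⟨C₁, hC₁pos, hC₁⟩ := hiter
  have hαn : (0:ℝ) < ‖α‖ := norm_pos_iff.mpr hα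
  refine ⟨2 * C₁ / ‖α‖, by positivity, ?_⟩
  intro x s hs
  have hs0 : (0:ℝ) < s := lt_trans (by norm_num) hs
  set f := fun y => φ y s with hfdef
  have hf : ContDiff ℝ ∞ f := (hφsmooth s).of_le (by simp)
  set c : ℝ := 2 / (s * ‖α‖ ^ 2) with hcdef
  have hcpos : 0 < c := by
    rw [hcdef]; positivity
  set Exps := Real.exp (Real.sqrt (1 + ‖s • x‖ ^ 2)) with hExps
  -- rewrite ψ(·,s) as an interval integral
  have hgrad : ∀ y : EuclideanSpace ℝ (Fin N),
      (inner ℝ (gradient f y) α : ℝ) = fderiv ℝ f y α := fun y => by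
    rw [gradient]; exact InnerProductSpace.toDual_symm_apply
  have hψ' : (fun y => ψ y s) = fun y => ∫ t in (0:ℝ)..1, c * fderiv ℝ f (Amap α t y) α := by
    funext y
    calc ψ y s = c * ∫ t in (0:ℝ)..1, fderiv ℝ f (Amap α t y) α := by
          rw [hψ y s]
          congr 1
          apply intervalIntegral.integral_congr
          intro t _
          simp only [Amap_apply]
          exact hgrad _
      _ = ∫ t in (0:ℝ)..1, c * fderiv ℝ f (Amap α t y) α :=
          (intervalIntegral.integral_const_mul c _).symm
  -- joint smoothness of the integrand
  have hfd : ContDiff ℝ ∞ (fderiv ℝ f) := hf.fderiv_right (by exact_mod_cast le_top)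
  have hjoint : ContDiff ℝ ∞
      (fun p : ℝ × EuclideanSpace ℝ (Fin N) => c * fderiv ℝ f (Amap α p.1 p.2) α) :=
    contDiff_const.mul ((hfd.comp (Amap_joint_smooth α)).clm_apply contDiff_const)
  obtain ⟨hjsm, heq⟩ :=
    pdl_intervalIntegral (fun t y => c * fderiv ℝ f (Amap α t y) α) hjoint β
  rw [hψ', heq x]
  -- pointwise bound of the integrand's partial derivatives
  have key : ∀ t ∈ Set.Icc (0:ℝ) 1,
      |partialDerivList β (fun y => c * fderiv ℝ f (Amap α t y) α) x|
        ≤ c * (‖α‖ * (C₁ * s ^ (n + 1) * Exps)) := by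
    intro t ht
    have hsl : ContDiff ℝ ∞ (fun y => c * fderiv ℝ f (Amap α t y) α) :=
      slice_contDiff (H := fun t y => c * fderiv ℝ f (Amap α t y) α) hjoint t
    have hu : ContDiff ℝ ∞ (fun y => fderiv ℝ f y α) := hfd.clm_apply contDiff_const
    have hg : ContDiff ℝ ∞ (fun y => fderiv ℝ f (Amap α t y) α) :=
      hu.comp (Amap α t).contDiff
    have h0 : |partialDerivList β (fun y => c * fderiv ℝ f (Amap α t y) α) x|
        ≤ ‖iteratedFDeriv ℝ n (fun y => c * fderiv ℝ f (Amap α t y) α) x‖ := by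
      conv_lhs => rw [← List.ofFn_get β]
      rw [pdl_ofFn β.get hsl x, ← Real.norm_eq_abs]
      refine le_trans ((iteratedFDeriv ℝ n (fun y => c * fderiv ℝ f (Amap α t y) α)
          x).le_opNorm (fun j => EuclideanSpace.single (β.get j) 1)) ?_
      have hprod : (∏ j : Fin n, ‖EuclideanSpace.single (β.get j) (1:ℝ)‖) = 1 := by
        simp [EuclideanSpace.norm_single]
      rw [hprod, mul_one]
    have h1 : iteratedFDeriv ℝ n (fun y => c * fderiv ℝ f (Amap α t y) α) x
        = c • iteratedFDeriv ℝ n (fun y => fderiv ℝ f (Amap α t y) α) x := by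
      have hsmul : (fun y => c * fderiv ℝ f (Amap α t y) α)
          = c • (fun y => fderiv ℝ f (Amap α t y) α) := rfl
      rw [hsmul, iteratedFDeriv_const_smul_apply (hg.contDiffAt.of_le (show ((n : ℕ) : WithTop ℕ∞) ≤ ∞ by exact_mod_cast le_top))]
    have h2 : ‖iteratedFDeriv ℝ n (fun y => fderiv ℝ f (Amap α t y) α) x‖
        ≤ ‖iteratedFDeriv ℝ n (fun y => fderiv ℝ f y α) (Amap α t x)‖ := by
      have hcomp : (fun y => fderiv ℝ f (Amap α t y) α)
          = (fun y => fderiv ℝ f y α) ∘ (Amap α t) := rfl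
      rw [hcomp, ContinuousLinearMap.iteratedFDeriv_comp_right (Amap α t) hu x
        (by exact_mod_cast le_top)]
      refine le_trans (ContinuousMultilinearMap.norm_compContinuousLinearMap_le _ _) ?_
      have hA1 : (∏ _j : Fin n, ‖Amap α t‖) ≤ 1 := by
        rw [Finset.prod_const, Finset.card_univ, Fintype.card_fin]
        apply pow_le_one₀ (norm_nonneg _)
        exact ContinuousLinearMap.opNorm_le_bound _ zero_le_one fun y => by
          rw [one_mul]; exact Amap_norm_le α hα ht y
      calc ‖iteratedFDeriv ℝ n (fun y => fderiv ℝ f y α) (Amap α t x)‖ *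
            ∏ _j : Fin n, ‖Amap α t‖
          ≤ ‖iteratedFDeriv ℝ n (fun y => fderiv ℝ f y α) (Amap α t x)‖ * 1 :=
            mul_le_mul_of_nonneg_left hA1 (norm_nonneg _)
        _ = _ := mul_one _
    have h3 : ∀ y : EuclideanSpace ℝ (Fin N),
        ‖iteratedFDeriv ℝ n (fun y => fderiv ℝ f y α) y‖
          ≤ ‖α‖ * ‖iteratedFDeriv ℝ (n + 1) f y‖ := by
      intro y
      have hcomp : (fun y => fderiv ℝ f y α)
          = (ContinuousLinearMap.apply ℝ ℝ α) ∘ (fderiv ℝ f) := rfl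
      rw [hcomp, ContinuousLinearMap.iteratedFDeriv_comp_left _ (hfd.contDiffAt (x := y))
        (by exact_mod_cast le_top)]
      refine le_trans (ContinuousLinearMap.norm_compContinuousMultilinearMap_le _ _) ?_
      rw [← norm_iteratedFDeriv_fderiv]
      apply mul_le_mul_of_nonneg_right _ (norm_nonneg _)
      exact ContinuousLinearMap.opNorm_le_bound _ (norm_nonneg α) fun L => by
        rw [mul_comm]; exact L.le_opNorm α
    have h4 : ‖iteratedFDeriv ℝ (n + 1) f (Amap α t x)‖ ≤ C₁ * s ^ (n + 1) * Exps := by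
      refine le_trans (hC₁ (Amap α t x) s hs) ?_
      rw [mul_assoc, mul_assoc]
      apply mul_le_mul_of_nonneg_left _ hC₁pos.le
      apply mul_le_mul_of_nonneg_left _ (by positivity : (0:ℝ) ≤ s ^ (n + 1))
      apply Real.exp_le_exp.mpr
      apply Real.sqrt_le_sqrt
      have hss : ‖s • Amap α t x‖ ≤ ‖s • x‖ := by
        rw [norm_smul, norm_smul]
        exact mul_le_mul_of_nonneg_left (Amap_norm_le α hα ht x) (norm_nonneg _)
      nlinarith [norm_nonneg (s • Amap α t x), norm_nonneg (s • x)]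
    calc |partialDerivList β (fun y => c * fderiv ℝ f (Amap α t y) α) x|
        ≤ ‖iteratedFDeriv ℝ n (fun y => c * fderiv ℝ f (Amap α t y) α) x‖ := h0
      _ = c * ‖iteratedFDeriv ℝ n (fun y => fderiv ℝ f (Amap α t y) α) x‖ := by
          rw [h1, norm_smul, Real.norm_eq_abs, abs_of_pos hcpos]
      _ ≤ c * (‖α‖ * (C₁ * s ^ (n + 1) * Exps)) := by
          apply mul_le_mul_of_nonneg_left _ hcpos.le
          refine le_trans h2 (le_trans (h3 _) ?_)
          exact mul_le_mul_of_nonneg_left h4 (norm_nonneg α)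
  -- integrate the bound
  have habs : |∫ t in (0:ℝ)..1,
      partialDerivList β (fun y => c * fderiv ℝ f (Amap α t y) α) x|
        ≤ (c * (‖α‖ * (C₁ * s ^ (n + 1) * Exps))) * |1 - 0| := by
    rw [← Real.norm_eq_abs]
    apply intervalIntegral.norm_integral_le_of_norm_le_const
    intro t ht
    rw [Real.norm_eq_abs]
    apply key t
    rw [Set.uIoc_of_le (by norm_num : (0:ℝ) ≤ 1)] at ht
    exact Set.Ioc_subset_Icc_self ht
  refine le_trans habs (le_of_eq ?_)
  have h10 : |(1:ℝ) - 0| = 1 := by norm_num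
  rw [h10, mul_one, hcdef, hExps]
  field_simp
  ring
end

section
/- Let dw(x) = ∏_{α∈R}|⟨x,α⟩|^{k(α)} dx with R finite, k ≥ 0. There exist constants 0 < c₁ ≤ c₂ such that for all x ∈ ℝ^N and r > 0, c₁ r^N ∏_{α∈R}(|⟨x,α⟩| + r)^{k(α)} ≤ w(B(x,r)) ≤ c₂ r^N ∏_{α∈R}(|⟨x,α⟩| + r)^{k(α)}. Consequently dw is a doubling measure. -/
/-!
On `closedBall x r` one has `|⟪y, α⟫| ≤ |⟪x, α⟫| + r ‖α‖ ≤ M (|⟪x, α⟫| + r)`, which bounds the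
weight from above. For the lower bound one finds a ball `closedBall z (ε r) ⊆ closedBall x r` on
which `|⟪y, α⟫| ≥ c (|⟪x, α⟫| + r)` for every `α ∈ R`: moving from `x` along a direction `v`
transverse to all the hyperplanes `α⟂`, a measure count on the line `x + ℝ v` yields a point
`z = x + t v` with `t ≤ r / 2` at distance `≳ r` from each of them. Both bounds are then integrated
against the Haar measure of balls, which is proportional to `r ^ N`. Doubling follows from
`|⟪x, α⟫| + 2 r ≤ 2 (|⟪x, α⟫| + r)`.
-/

open Metric MeasureTheory
open scoped RealInnerProductSpace ENNReal

theorem Real.exists_mem_Icc_forall_mul_le_abs_add_mul {ι : Type*} (s : Finset ι) {d : ι → ℝ}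
    (hd : ∀ i ∈ s, d i ≠ 0) :
    ∃ δ > 0, ∀ (a : ι → ℝ) (L : ℝ), 0 < L →
      ∃ t ∈ Set.Icc 0 L, ∀ i ∈ s, δ * L ≤ |a i + t * d i| := by
  set S := ∑ i ∈ s, |d i|⁻¹
  have hS : 0 ≤ S := Finset.sum_nonneg fun i _ ↦ by positivity
  refine ⟨(4 * (S + 1))⁻¹, by positivity, fun a L hL ↦ ?_⟩
  set δ := (4 * (S + 1))⁻¹
  -- `|a i + t * d i| < δ * L` confines `t` to a ball of radius `δ * L / |d i|`.
  set bad : ι → Set ℝ := fun i ↦ closedBall (-a i / d i) (δ * L * |d i|⁻¹)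
  have hbad : volume (⋃ i ∈ s, bad i) < volume (Set.Icc 0 L) := by
    have h2δS : 2 * δ * S < 1 := by
      simp only [δ]; field_simp; linarith
    calc volume (⋃ i ∈ s, bad i) ≤ ∑ i ∈ s, volume (bad i) := measure_biUnion_finset_le _ _
      _ = ENNReal.ofReal (2 * δ * S * L) := by
        rw [Finset.mul_sum, Finset.sum_mul, ENNReal.ofReal_sum_of_nonneg fun i _ ↦ by positivity]
        refine Finset.sum_congr rfl fun i _ ↦ ?_
        rw [Real.volume_closedBall]; ring_nf
      _ < ENNReal.ofReal L := by
        rw [ENNReal.ofReal_lt_ofReal_iff hL]; nlinarith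
      _ = volume (Set.Icc 0 L) := by rw [Real.volume_Icc, sub_zero]
  obtain ⟨t, ht, htbad⟩ : (Set.Icc 0 L \ ⋃ i ∈ s, bad i).Nonempty := by
    by_contra h
    rw [Set.not_nonempty_iff_eq_empty, Set.sdiff_eq_empty] at h
    exact (measure_mono h).not_gt hbad
  refine ⟨t, ht, fun i hi ↦ ?_⟩
  have hdi : 0 < |d i| := abs_pos.mpr (hd i hi)
  have hfar : δ * L * |d i|⁻¹ < |t - -a i / d i| := by
    simpa [bad, Real.dist_eq] using fun h ↦ htbad (Set.mem_biUnion hi h)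
  calc δ * L = |d i| * (δ * L * |d i|⁻¹) := by field_simp
    _ ≤ |d i| * |t - -a i / d i| := by gcongr
    _ = |a i + t * d i| := by
      have := hd i hi
      rw [← abs_mul]; congr 1; field_simp; ring

namespace Finset

theorem exists_one_le_forall_norm_le {E : Type*} [SeminormedAddCommGroup E] (R : Finset E) :
    ∃ M, 1 ≤ M ∧ ∀ α ∈ R, ‖α‖ ≤ M :=
  ⟨1 + ∑ α ∈ R, ‖α‖, by simp [sum_nonneg],
    fun α hα ↦ (single_le_sum (f := (‖·‖)) (fun _ _ ↦ norm_nonneg _) hα).trans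
      (le_add_of_nonneg_left zero_le_one)⟩

variable {ι : Type*} (s : Finset ι) {k : ι → ℝ} {a b : ι → ℝ} {c : ℝ}

theorem rpow_sum_mul_prod_rpow (hc : 0 < c) (hb : ∀ i ∈ s, 0 ≤ b i) :
    c ^ (∑ i ∈ s, k i) * ∏ i ∈ s, b i ^ k i = ∏ i ∈ s, (c * b i) ^ k i := by
  rw [Real.rpow_sum_of_pos hc, ← prod_mul_distrib]
  exact prod_congr rfl fun i hi ↦ (Real.mul_rpow hc.le (hb i hi)).symm

theorem prod_rpow_le_rpow_sum_mul_prod_rpow (hk : ∀ i ∈ s, 0 ≤ k i) (hc : 0 < c)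
    (ha : ∀ i ∈ s, 0 ≤ a i) (hab : ∀ i ∈ s, a i ≤ c * b i) :
    ∏ i ∈ s, a i ^ k i ≤ c ^ (∑ i ∈ s, k i) * ∏ i ∈ s, b i ^ k i := by
  have hb : ∀ i ∈ s, 0 ≤ b i := fun i hi ↦
    nonneg_of_mul_nonneg_right ((ha i hi).trans (hab i hi)) hc
  rw [rpow_sum_mul_prod_rpow s hc hb]
  exact prod_le_prod (fun i hi ↦ by have := ha i hi; positivity)
    fun i hi ↦ Real.rpow_le_rpow (ha i hi) (hab i hi) (hk i hi)

theorem rpow_sum_mul_prod_rpow_le_prod_rpow (hk : ∀ i ∈ s, 0 ≤ k i) (hc : 0 < c)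
    (hb : ∀ i ∈ s, 0 ≤ b i) (hab : ∀ i ∈ s, c * b i ≤ a i) :
    c ^ (∑ i ∈ s, k i) * ∏ i ∈ s, b i ^ k i ≤ ∏ i ∈ s, a i ^ k i := by
  rw [rpow_sum_mul_prod_rpow s hc hb]
  exact prod_le_prod (fun i hi ↦ by have := hb i hi; positivity)
    fun i hi ↦ Real.rpow_le_rpow (by have := hb i hi; positivity) (hab i hi) (hk i hi)

end Finset

section InnerProductSpace

variable {E : Type*} [NormedAddCommGroup E] [InnerProductSpace ℝ E]

theorem dense_setOf_inner_ne_zero {α : E} (hα : α ≠ 0) : Dense {v : E | ⟪v, α⟫ ≠ 0} := by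
  have hcompl : {v : E | ⟪v, α⟫ ≠ 0} = ((ℝ ∙ α)ᗮ : Set E)ᶜ := by
    ext v; simp [Submodule.mem_orthogonal_singleton_iff_inner_left]
  rw [hcompl, ← interior_eq_empty_iff_dense_compl, ← Set.not_nonempty_iff_eq_empty]
  intro h
  have := Submodule.eq_top_of_nonempty_interior' _ h
  simp_all [Submodule.orthogonal_eq_top_iff]

theorem exists_mem_ball_forall_inner_ne_zero [CompleteSpace E] {R : Finset E} (hR0 : 0 ∉ R) :
    ∃ v ∈ ball (0 : E) 1, ∀ α ∈ R, ⟪v, α⟫ ≠ 0 := by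
  have hdense : Dense (⋂ α ∈ (R : Set E), {v : E | ⟪v, α⟫ ≠ 0}) :=
    dense_biInter_of_isOpen (fun α _ ↦ isOpen_ne_fun (by fun_prop) (by fun_prop))
      R.countable_toSet fun α hα ↦ dense_setOf_inner_ne_zero (ne_of_mem_of_not_mem hα hR0)
  obtain ⟨v, hv, hvR⟩ := hdense.inter_open_nonempty _ isOpen_ball ⟨0, mem_ball_self one_pos⟩
  exact ⟨v, hv, by simpa using hvR⟩

theorem abs_inner_le_abs_inner_add_dist_mul (x y α : E) :
    |⟪y, α⟫| ≤ |⟪x, α⟫| + dist y x * ‖α‖ := by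
  calc |⟪y, α⟫| = |⟪x, α⟫ + ⟪y - x, α⟫| := by rw [inner_sub_left, add_sub_cancel]
    _ ≤ |⟪x, α⟫| + |⟪y - x, α⟫| := abs_add_le _ _
    _ ≤ |⟪x, α⟫| + dist y x * ‖α‖ := by
      rw [dist_eq_norm]; gcongr; exact abs_real_inner_le_norm _ _

theorem exists_mem_closedBall_forall_mul_le_abs_inner [CompleteSpace E] {R : Finset E}
    (hR0 : 0 ∉ R) :
    ∃ δ > 0, ∀ (x : E) (r : ℝ), 0 < r → ∃ z ∈ closedBall x (r / 2), ∀ α ∈ R, δ * r ≤ |⟪z, α⟫| := by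
  obtain ⟨v, hv, hvR⟩ := exists_mem_ball_forall_inner_ne_zero hR0
  obtain ⟨δ, hδ, hline⟩ := Real.exists_mem_Icc_forall_mul_le_abs_add_mul R hvR
  refine ⟨δ / 2, by positivity, fun x r hr ↦ ?_⟩
  obtain ⟨t, ⟨ht0, htr⟩, ht⟩ := hline (fun α ↦ ⟪x, α⟫) (r / 2) (by positivity)
  refine ⟨x + t • v, ?_, fun α hα ↦ ?_⟩
  · rw [mem_ball_zero_iff] at hv
    rw [mem_closedBall, dist_eq_norm, add_sub_cancel_left, norm_smul, Real.norm_of_nonneg ht0]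
    nlinarith [norm_nonneg v]
  · rw [inner_add_left, real_inner_smul_left]
    linarith [ht α hα]

theorem exists_closedBall_subset_forall_mul_le_abs_inner [CompleteSpace E] {R : Finset E}
    (hR0 : 0 ∉ R) :
    ∃ c > 0, ∃ ε > 0, ∀ (x : E) (r : ℝ), 0 < r → ∃ z, closedBall z (ε * r) ⊆ closedBall x r ∧
      ∀ y ∈ closedBall z (ε * r), ∀ α ∈ R, c * (|⟪x, α⟫| + r) ≤ |⟪y, α⟫| := by
  obtain ⟨δ, hδ, hfar⟩ := exists_mem_closedBall_forall_mul_le_abs_inner hR0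
  obtain ⟨M, hM, hRM⟩ := R.exists_one_le_forall_norm_le
  set ε := min (1 / 2) (δ / (2 * M))
  have hε : 0 < ε := by positivity
  have hεM : ε * M ≤ δ / 2 := by
    calc ε * M ≤ δ / (2 * M) * M := by gcongr; exact min_le_right _ _
      _ = δ / 2 := by field_simp
  set c := δ / (2 * (M + 1) + δ)
  have hc : c * (2 * (M + 1) + δ) = δ := by simp only [c]; field_simp
  refine ⟨c, by positivity, ε, hε, fun x r hr ↦ ?_⟩
  obtain ⟨z, hzx, hz⟩ := hfar x r hr
  rw [mem_closedBall] at hzx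
  have hsub : closedBall z (ε * r) ⊆ closedBall x r := by
    refine closedBall_subset_closedBall' ?_
    nlinarith [min_le_left (1 / 2 : ℝ) (δ / (2 * M))]
  refine ⟨z, hsub, fun y hy α hα ↦ ?_⟩
  have hyz : dist z y ≤ ε * r := by rw [dist_comm]; exact hy
  have hyx : dist x y ≤ r := by rw [dist_comm]; exact hsub hy
  have hαM := hRM α hα
  have hnear : δ * r / 2 ≤ |⟪y, α⟫| := by
    have := abs_inner_le_abs_inner_add_dist_mul y z α
    nlinarith [hz α hα, norm_nonneg α, dist_nonneg (x := z) (y := y)]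
  have hfar : |⟪x, α⟫| - M * r ≤ |⟪y, α⟫| := by
    have := abs_inner_le_abs_inner_add_dist_mul y x α
    nlinarith [norm_nonneg α, dist_nonneg (x := x) (y := y)]
  -- `c (|⟪x, α⟫| + r)` is at most the convex combination `c · hfar + (1 - c) · hnear`.
  have hc1 : c ≤ 1 := by
    rw [div_le_one (by positivity)]; linarith
  nlinarith [mul_le_mul_of_nonneg_left hfar (by positivity : (0 : ℝ) ≤ c),
    mul_le_mul_of_nonneg_left hnear (sub_nonneg.mpr hc1)]

end InnerProductSpace

namespace MeasureTheory

variable {X : Type*} [MeasurableSpace X] {μ : Measure X} {f : X → ℝ≥0∞} {s : Set X} {C : ℝ≥0∞}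

theorem withDensity_apply_le_mul (hs : MeasurableSet s) (h : ∀ y ∈ s, f y ≤ C) :
    μ.withDensity f s ≤ C * μ s := by
  rw [withDensity_apply _ hs, ← setLIntegral_const]
  exact setLIntegral_mono' hs h

theorem mul_le_withDensity_apply (hs : MeasurableSet s) (h : ∀ y ∈ s, C ≤ f y) :
    C * μ s ≤ μ.withDensity f s := by
  rw [withDensity_apply _ hs, ← setLIntegral_const]
  exact setLIntegral_mono' hs h

theorem measure_closedBall_two_mul_le_of_bounds {Y : Type*} [PseudoMetricSpace Y]
    [MeasurableSpace Y] {ν : Measure Y} {P : Y → ℝ → ℝ} {n : ℕ} {c₁ c₂ D : ℝ} (hc₁ : 0 < c₁)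
    (hc₂ : 0 ≤ c₂) (hD : 0 ≤ D) (hPD : ∀ y r, 0 < r → P y (2 * r) ≤ D * P y r)
    (hlow : ∀ y r, 0 < r → ENNReal.ofReal (c₁ * r ^ n * P y r) ≤ ν (closedBall y r))
    (hup : ∀ y r, 0 < r → ν (closedBall y r) ≤ ENNReal.ofReal (c₂ * r ^ n * P y r))
    {y : Y} {r : ℝ} (hr : 0 < r) :
    ν (closedBall y (2 * r)) ≤ ENNReal.ofReal (c₂ * 2 ^ n * D / c₁) * ν (closedBall y r) := by
  calc ν (closedBall y (2 * r)) ≤ ENNReal.ofReal (c₂ * (2 * r) ^ n * P y (2 * r)) :=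
        hup y (2 * r) (by positivity)
    _ ≤ ENNReal.ofReal (c₂ * 2 ^ n * D / c₁ * (c₁ * r ^ n * P y r)) := by
        refine ENNReal.ofReal_le_ofReal ?_
        calc c₂ * (2 * r) ^ n * P y (2 * r) ≤ c₂ * (2 * r) ^ n * (D * P y r) := by
              gcongr; exact hPD y r hr
          _ = c₂ * 2 ^ n * D / c₁ * (c₁ * r ^ n * P y r) := by field_simp; ring
    _ = ENNReal.ofReal (c₂ * 2 ^ n * D / c₁) * ENNReal.ofReal (c₁ * r ^ n * P y r) :=
        ENNReal.ofReal_mul (by positivity)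
    _ ≤ ENNReal.ofReal (c₂ * 2 ^ n * D / c₁) * ν (closedBall y r) := by
        gcongr; exact hlow y r hr

end MeasureTheory

section Haar

variable {E : Type*} [NormedAddCommGroup E] [NormedSpace ℝ E] [FiniteDimensional ℝ E]
  [MeasurableSpace E] [BorelSpace E] (μ : Measure E) [μ.IsAddHaarMeasure]

theorem addHaar_closedBall_eq_ofReal (x : E) {r : ℝ} (hr : 0 ≤ r) :
    μ (closedBall x r) = ENNReal.ofReal ((μ (ball 0 1)).toReal * r ^ Module.finrank ℝ E) := by
  rw [Measure.addHaar_closedBall μ x hr, ENNReal.ofReal_mul' (by positivity), mul_comm,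
    ENNReal.ofReal_toReal measure_ball_lt_top.ne]

omit [BorelSpace E] in
theorem toReal_addHaar_ball_pos : 0 < (μ (ball (0 : E) 1)).toReal :=
  ENNReal.toReal_pos (measure_ball_pos μ _ one_pos).ne' measure_ball_lt_top.ne

end Haar

section DunklWeight

variable {E : Type*} [NormedAddCommGroup E] [InnerProductSpace ℝ E] [FiniteDimensional ℝ E]
  [MeasurableSpace E] [BorelSpace E] (μ : Measure E) [μ.IsAddHaarMeasure]

theorem exists_pos_le_withDensity_closedBall {R : Finset E} (hR0 : 0 ∉ R) {k : E → ℝ}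
    (hk : ∀ α ∈ R, 0 ≤ k α) :
    ∃ c > 0, ∀ (x : E) (r : ℝ), 0 < r →
      ENNReal.ofReal (c * r ^ Module.finrank ℝ E * ∏ α ∈ R, (|⟪x, α⟫| + r) ^ k α) ≤
        μ.withDensity (fun y ↦ ENNReal.ofReal (∏ α ∈ R, |⟪y, α⟫| ^ k α)) (closedBall x r) := by
  obtain ⟨c, hc, ε, hε, hball⟩ := exists_closedBall_subset_forall_mul_le_abs_inner (E := E) hR0
  have hV := toReal_addHaar_ball_pos μ
  refine ⟨c ^ (∑ α ∈ R, k α) * ε ^ Module.finrank ℝ E * (μ (ball 0 1)).toReal, by positivity,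
    fun x r hr ↦ ?_⟩
  obtain ⟨z, hsub, hz⟩ := hball x r hr
  calc ENNReal.ofReal (c ^ (∑ α ∈ R, k α) * ε ^ Module.finrank ℝ E * (μ (ball 0 1)).toReal *
        r ^ Module.finrank ℝ E * ∏ α ∈ R, (|⟪x, α⟫| + r) ^ k α)
      = ENNReal.ofReal (c ^ (∑ α ∈ R, k α) * ∏ α ∈ R, (|⟪x, α⟫| + r) ^ k α) *
          μ (closedBall z (ε * r)) := by
        rw [addHaar_closedBall_eq_ofReal μ z (by positivity), ← ENNReal.ofReal_mul (by positivity),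
          mul_pow]
        congr 1
        ring
    _ ≤ μ.withDensity (fun y ↦ ENNReal.ofReal (∏ α ∈ R, |⟪y, α⟫| ^ k α)) (closedBall z (ε * r)) :=
        mul_le_withDensity_apply measurableSet_closedBall fun y hy ↦ ENNReal.ofReal_le_ofReal <|
          R.rpow_sum_mul_prod_rpow_le_prod_rpow hk hc (fun _ _ ↦ by positivity) (hz y hy)
    _ ≤ _ := measure_mono hsub

theorem exists_withDensity_closedBall_le (R : Finset E) {k : E → ℝ} (hk : ∀ α ∈ R, 0 ≤ k α) :
    ∃ C, ∀ (x : E) (r : ℝ), 0 < r →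
      μ.withDensity (fun y ↦ ENNReal.ofReal (∏ α ∈ R, |⟪y, α⟫| ^ k α)) (closedBall x r) ≤
        ENNReal.ofReal (C * r ^ Module.finrank ℝ E * ∏ α ∈ R, (|⟪x, α⟫| + r) ^ k α) := by
  obtain ⟨M, hM, hRM⟩ := R.exists_one_le_forall_norm_le
  refine ⟨M ^ (∑ α ∈ R, k α) * (μ (ball 0 1)).toReal, fun x r hr ↦ ?_⟩
  have hpoint : ∀ y ∈ closedBall x r, ∀ α ∈ R, |⟪y, α⟫| ≤ M * (|⟪x, α⟫| + r) := by
    intro y hy α hα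
    have := abs_inner_le_abs_inner_add_dist_mul x y α
    nlinarith [mem_closedBall.mp hy, hRM α hα, abs_nonneg ⟪x, α⟫, norm_nonneg α]
  calc μ.withDensity (fun y ↦ ENNReal.ofReal (∏ α ∈ R, |⟪y, α⟫| ^ k α)) (closedBall x r)
      ≤ ENNReal.ofReal (M ^ (∑ α ∈ R, k α) * ∏ α ∈ R, (|⟪x, α⟫| + r) ^ k α) *
          μ (closedBall x r) :=
        withDensity_apply_le_mul measurableSet_closedBall fun y hy ↦ ENNReal.ofReal_le_ofReal <|
          R.prod_rpow_le_rpow_sum_mul_prod_rpow hk (by positivity) (fun _ _ ↦ abs_nonneg _)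
            (hpoint y hy)
    _ = _ := by
        rw [addHaar_closedBall_eq_ofReal μ x hr.le, ← ENNReal.ofReal_mul (by positivity)]
        congr 1
        ring

end DunklWeight

theorem dunkl_ball_volume_estimate_general (N : ℕ)
    (R : Finset (EuclideanSpace ℝ (Fin N))) (hR0 : (0 : EuclideanSpace ℝ (Fin N)) ∉ R)
    (k : EuclideanSpace ℝ (Fin N) → ℝ) (hk : ∀ α ∈ R, 0 ≤ k α)
    (w : Measure (EuclideanSpace ℝ (Fin N)))
    (hw : w = volume.withDensity
      (fun x => ENNReal.ofReal (∏ α ∈ R, |(inner ℝ x α : ℝ)| ^ (k α)))) :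
    (∃ c₁ c₂ : ℝ, 0 < c₁ ∧ c₁ ≤ c₂ ∧
      ∀ (x : EuclideanSpace ℝ (Fin N)) (r : ℝ), 0 < r →
        ENNReal.ofReal (c₁ * r ^ N * ∏ α ∈ R, (|(inner ℝ x α : ℝ)| + r) ^ (k α)) ≤
            w (closedBall x r) ∧
          w (closedBall x r) ≤
            ENNReal.ofReal (c₂ * r ^ N * ∏ α ∈ R, (|(inner ℝ x α : ℝ)| + r) ^ (k α))) ∧
    (∃ Cd : ℝ, 0 < Cd ∧ ∀ (x : EuclideanSpace ℝ (Fin N)) (r : ℝ), 0 < r →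
      w (closedBall x (2 * r)) ≤ ENNReal.ofReal Cd * w (closedBall x r)) := by
  obtain ⟨c₁, hc₁, hlow⟩ := exists_pos_le_withDensity_closedBall volume hR0 hk
  obtain ⟨C, hup⟩ := exists_withDensity_closedBall_le volume R hk
  rw [finrank_euclideanSpace_fin] at hlow hup
  subst hw
  set c₂ := max c₁ C
  have hc₂ : 0 < c₂ := lt_max_of_lt_left hc₁
  have hup' : ∀ (x : EuclideanSpace ℝ (Fin N)) (r : ℝ), 0 < r →
      volume.withDensity (fun y ↦ ENNReal.ofReal (∏ α ∈ R, |⟪y, α⟫| ^ k α)) (closedBall x r) ≤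
        ENNReal.ofReal (c₂ * r ^ N * ∏ α ∈ R, (|⟪x, α⟫| + r) ^ k α) := fun x r hr ↦
    (hup x r hr).trans <| ENNReal.ofReal_le_ofReal <| by gcongr; exact le_max_right _ _
  have hdouble : ∀ (x : EuclideanSpace ℝ (Fin N)) (r : ℝ), 0 < r →
      ∏ α ∈ R, (|⟪x, α⟫| + 2 * r) ^ k α ≤ 2 ^ (∑ α ∈ R, k α) * ∏ α ∈ R, (|⟪x, α⟫| + r) ^ k α :=
    fun x r _ ↦ R.prod_rpow_le_rpow_sum_mul_prod_rpow hk two_pos (fun _ _ ↦ by positivity)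
      fun α _ ↦ by linarith [abs_nonneg ⟪x, α⟫]
  exact ⟨⟨c₁, c₂, hc₁, le_max_left _ _, fun x r hr ↦ ⟨hlow x r hr, hup' x r hr⟩⟩,
    c₂ * 2 ^ N * 2 ^ (∑ α ∈ R, k α) / c₁, by positivity, fun x r hr ↦
      measure_closedBall_two_mul_le_of_bounds hc₁ hc₂.le (by positivity) hdouble hlow hup' hr⟩

theorem dunkl_ball_volume_estimate (N : ℕ) (hN : 0 < N)
    (R : Finset (EuclideanSpace ℝ (Fin N))) (hR0 : (0 : EuclideanSpace ℝ (Fin N)) ∉ R)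
    (k : EuclideanSpace ℝ (Fin N) → ℝ) (hk : ∀ α ∈ R, 0 ≤ k α)
    -- `R` is invariant under the reflections `σ_α`, `α ∈ R`, and `k` is invariant as well
    (hRinv : ∀ α ∈ R, ∀ β ∈ R,
      β - ((2 * (inner ℝ β α : ℝ) / ‖α‖ ^ 2) : ℝ) • α ∈ R)
    (hkinv : ∀ α ∈ R, ∀ β ∈ R,
      k (β - ((2 * (inner ℝ β α : ℝ) / ‖α‖ ^ 2) : ℝ) • α) = k β)
    (w : Measure (EuclideanSpace ℝ (Fin N)))
    (hw : w = volume.withDensity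
      (fun x => ENNReal.ofReal (∏ α ∈ R, |(inner ℝ x α : ℝ)| ^ (k α)))) :
    (∃ c₁ c₂ : ℝ, 0 < c₁ ∧ c₁ ≤ c₂ ∧
      ∀ (x : EuclideanSpace ℝ (Fin N)) (r : ℝ), 0 < r →
        ENNReal.ofReal (c₁ * r ^ N * ∏ α ∈ R, (|(inner ℝ x α : ℝ)| + r) ^ (k α)) ≤
            w (closedBall x r) ∧
          w (closedBall x r) ≤
            ENNReal.ofReal (c₂ * r ^ N * ∏ α ∈ R, (|(inner ℝ x α : ℝ)| + r) ^ (k α))) ∧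
    (∃ Cd : ℝ, 0 < Cd ∧ ∀ (x : EuclideanSpace ℝ (Fin N)) (r : ℝ), 0 < r →
      w (closedBall x (2 * r)) ≤ ENNReal.ofReal Cd * w (closedBall x r)) :=
  dunkl_ball_volume_estimate_general N R hR0 k hk w hw
end
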